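/- arXiv:2011.11420 — 3 statements merged into one kernel-verified Lean document; each statement's English description precedes it below -/
import Mathlib

section
/- Let f be a measurable function on ℝⁿ and Q a cube of finite positive measure. If m_f(Q) is a median value of f on Q, i.e., both |{x ∈ Q : f(x) > m_f(Q)}| ≤ |Q|/2 and |{x ∈ Q : f(x) < m_f(Q)}| ≤ |Q|/2, then |m_f(Q)| ≤ (f·1_Q)^*(|Q|/2), where g^*(t) = inf{α > 0 : |{x : |g(x)| > α}| < t} is the decreasing rearrangement. -/
/-!
If `α < |m|`, say `α < m`, the median property puts at least half of `Q` into `{f ≥ m}`,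
which lies inside `{|f| > α}`; so no `α < |m|` is admissible in the infimum defining the
rearrangement. That infimum is over a nonempty set because the tails `|{x ∈ Q : |f x| > α}|`
of the finite measure `volume.restrict Q` tend to `0` as `α → ∞`.
-/

open Set Filter MeasureTheory
open scoped ENNReal

noncomputable section

/-- The decreasing rearrangement `g^*(t) = inf {α > 0 : |{x : |g x| > α}| < t}`. -/
def rearrangement {n : ℕ} (g : (Fin n → ℝ) → ℝ) (t : ℝ≥0∞) : ℝ :=
  sInf {α : ℝ | 0 < α ∧ volume {x | α < |g x|} < t}

open Topology

section

variable {X : Type*} [MeasurableSpace X] {μ : Measure X}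

def IsMedian (μ : Measure X) (s : Set X) (f : X → ℝ) (m : ℝ) : Prop :=
  μ {x ∈ s | m < f x} ≤ μ s / 2 ∧ μ {x ∈ s | f x < m} ≤ μ s / 2

theorem tendsto_measure_lt_abs_atTop [IsFiniteMeasure μ] {f : X → ℝ} (hf : AEMeasurable f μ) :
    Tendsto (fun α : ℝ ↦ μ {x | α < |f x|}) atTop (𝓝 0) := by
  have hempty : ⋂ α : ℝ, {x | α < |f x|} = ∅ :=
    eq_empty_of_forall_notMem fun x hx ↦
      lt_irrefl _ (show |f x| < |f x| from mem_iInter.1 hx _)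
  have := tendsto_measure_iInter_atTop (μ := μ)
    (fun α ↦ nullMeasurableSet_lt aemeasurable_const hf.abs)
    (fun α β hαβ x (hx : β < |f x|) ↦ hαβ.trans_lt hx) ⟨0, measure_ne_top μ _⟩
  rwa [hempty, measure_empty] at this

theorem half_le_measure_diff_of_measure_inter_le_half {s t : Set X} (hs : μ s ≠ ∞)
    (ht : μ (s ∩ t) ≤ μ s / 2) : μ s / 2 ≤ μ (s \ t) := by
  have hcover : μ s ≤ μ (s ∩ t) + μ (s \ t) := by
    simpa only [inter_union_sdiff] using measure_union_le (μ := μ) (s ∩ t) (s \ t)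
  refine (ENNReal.add_le_add_iff_left (ENNReal.div_ne_top hs two_ne_zero)).1 ?_
  calc μ s / 2 + μ s / 2 = μ s := ENNReal.add_halves _
    _ ≤ μ (s ∩ t) + μ (s \ t) := hcover
    _ ≤ μ s / 2 + μ (s \ t) := by gcongr

theorem IsMedian.half_le_measure_inter_lt_abs {s : Set X} {f : X → ℝ} {m α : ℝ}
    (hm : IsMedian μ s f m) (hs : μ s ≠ ∞) (hα : α < |m|) :
    μ s / 2 ≤ μ (s ∩ {x | α < |f x|}) := by
  rcases lt_abs.1 hα with hαm | hαm
  · refine (half_le_measure_diff_of_measure_inter_le_half hs hm.2).trans (measure_mono ?_)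
    rintro x ⟨hxs, hx⟩
    exact ⟨hxs, hαm.trans_le ((not_lt.1 hx).trans (le_abs_self _))⟩
  · refine (half_le_measure_diff_of_measure_inter_le_half hs hm.1).trans (measure_mono ?_)
    rintro x ⟨hxs, hx⟩
    exact ⟨hxs, hαm.trans_le ((neg_le_neg (not_lt.1 hx)).trans (neg_le_abs _))⟩

end

theorem setOf_lt_abs_indicator {X : Type*} {s : Set X} {f : X → ℝ} {α : ℝ} (hα : 0 ≤ α) :
    {x | α < |s.indicator f x|} = s ∩ {x | α < |f x|} := by
  ext x
  by_cases hx : x ∈ s <;> simp [hx, hα.not_gt]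

theorem stmt_6_general {n : ℕ} (f : (Fin n → ℝ) → ℝ) (hf : Measurable f)
    (Q : Set (Fin n → ℝ))
    (hQpos : 0 < volume Q) (hQfin : volume Q < ⊤) (m : ℝ)
    (h1 : volume {x ∈ Q | m < f x} ≤ volume Q / 2)
    (h2 : volume {x ∈ Q | f x < m} ≤ volume Q / 2) :
    |m| ≤ rearrangement (Q.indicator f) (volume Q / 2) := by
  have hmedian : IsMedian volume Q f m := ⟨h1, h2⟩
  have : IsFiniteMeasure (volume.restrict Q) := isFiniteMeasure_restrict.2 hQfin.ne
  obtain ⟨α, hα, hαpos⟩ :=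
    ((tendsto_measure_lt_abs_atTop (μ := volume.restrict Q) hf.aemeasurable).eventually_lt_const
      (ENNReal.half_pos hQpos.ne')).and (eventually_gt_atTop 0) |>.exists
  have hα_admissible : volume {x | α < |Q.indicator f x|} < volume Q / 2 := by
    rwa [setOf_lt_abs_indicator hαpos.le, inter_comm,
      ← Measure.restrict_apply (measurableSet_lt measurable_const hf.abs)]
  refine le_csInf ⟨α, hαpos, hα_admissible⟩ fun β ⟨hβpos, hβ⟩ ↦ le_of_not_gt fun hβm ↦ ?_
  refine hβ.not_ge ?_
  rw [setOf_lt_abs_indicator hβpos.le]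
  exact hmedian.half_le_measure_inter_lt_abs hQfin.ne hβm

/-- If `m` is a median value of a measurable function `f` on a set `Q` of finite
positive measure, then `|m| ≤ (f·1_Q)^*(|Q|/2)`. -/
theorem stmt_6 {n : ℕ} (f : (Fin n → ℝ) → ℝ) (hf : Measurable f)
    (Q : Set (Fin n → ℝ)) (hQ : MeasurableSet Q)
    (hQpos : 0 < volume Q) (hQfin : volume Q < ⊤) (m : ℝ)
    (h1 : volume {x ∈ Q | m < f x} ≤ volume Q / 2)
    (h2 : volume {x ∈ Q | f x < m} ≤ volume Q / 2) :
    |m| ≤ rearrangement (Q.indicator f) (volume Q / 2) :=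
  stmt_6_general f hf Q hQpos hQfin m h1 h2
end
end

section
/- Let 1 ≤ p < ∞ and let w be a weight in the restricted class A_p^R, i.e., [w]_{A_p^R} := sup over cubes Q and measurable E ⊆ Q of (|E|/|Q|)·(w(Q)/w(E))^{1/p} < ∞. Then for every measurable set E ⊆ ℝⁿ of finite measure, the Hardy–Littlewood maximal function satisfies ‖M𝟙_E‖_{L^{p,∞}(w)} ≲ [w]_{A_p^R} · w(E)^{1/p}. -/
/-! Every point of `{M𝟙_E > λ}` lies in a cube `Q` with `|E ∩ Q| > λ |Q|`. Among such cubes of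
radius at most `R`, Vitali's lemma selects disjoint `Q_j` whose fourfold enlargements cover the
corresponding points. In `4Q_j` the set `E ∩ Q_j` has density at least `λ / 4ⁿ`, so the `A_p^R`
condition gives `w(4Q_j) ≤ (4ⁿ K / λ)^p w(E ∩ Q_j)`; summing over `j` and letting `R → ∞` yields
`w({M𝟙_E > λ}) ≤ (4ⁿ K / λ)^p w(E)`. -/

open Set Filter MeasureTheory
open scoped ENNReal

noncomputable section

/-- Cubes in `ℝⁿ` are realized as closed balls for the sup norm on `Fin n → ℝ`.
The Hardy–Littlewood maximal function of `𝟙_E`: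
`M𝟙_E(x) = sup_{Q ∋ x} |E ∩ Q| / |Q|` over all cubes `Q`. -/
def maxInd {n : ℕ} (E : Set (Fin n → ℝ)) (x : Fin n → ℝ) : ℝ≥0∞ :=
  ⨆ (c : Fin n → ℝ) (r : ℝ) (_ : 0 < r) (_ : x ∈ Metric.closedBall c r),
    volume (E ∩ Metric.closedBall c r) / volume (Metric.closedBall c r)

open Metric

namespace RestrictedAp

variable {n : ℕ}

/-- For `μ = w dx`, `Bound μ p K` says `[w]_{A_p^R} ≤ K`. -/
def Bound (μ : Measure (Fin n → ℝ)) (p : ℝ) (K : ℝ≥0∞) : Prop :=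
  ∀ (c : Fin n → ℝ) (r : ℝ), 0 < r → ∀ F ⊆ closedBall c r, MeasurableSet F →
    volume F / volume (closedBall c r) * (μ (closedBall c r) / μ F) ^ (1 / p) ≤ K

def denseBallSet (E : Set (Fin n → ℝ)) (a : ℝ≥0∞) (R : ℝ) : Set (Fin n → ℝ) :=
  {x | ∃ c r, 0 < r ∧ r ≤ R ∧ x ∈ closedBall c r ∧
    a * volume (closedBall c r) ≤ volume (E ∩ closedBall c r)}

lemma monotone_denseBallSet (E : Set (Fin n → ℝ)) (a : ℝ≥0∞) :
    Monotone (denseBallSet E a) := by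
  rintro R R' hR x ⟨c, r, hr, hrR, hx, hdens⟩
  exact ⟨c, r, hr, hrR.trans hR, hx, hdens⟩

lemma setOf_lt_maxInd_subset (E : Set (Fin n → ℝ)) (a : ℝ≥0∞) :
    {x | a < maxInd E x} ⊆ ⋃ R : ℝ, denseBallSet E a R := by
  intro x hx
  simp only [mem_ofPred_eq, maxInd, lt_iSup_iff] at hx
  obtain ⟨c, r, hr, hx, hlt⟩ := hx
  have hdens := (ENNReal.lt_div_iff_mul_lt (.inl (measure_closedBall_pos volume c hr).ne')
    (.inl measure_closedBall_lt_top.ne)).1 hlt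
  exact mem_iUnion.2 ⟨r, c, r, hr, le_rfl, hx, hdens.le⟩

lemma volume_closedBall_four_mul (c : Fin n → ℝ) {r : ℝ} (hr : 0 ≤ r) :
    volume (closedBall c (4 * r)) = 4 ^ n * volume (closedBall c r) := by
  rw [Real.volume_pi_closedBall c (by positivity), Real.volume_pi_closedBall c hr,
    Fintype.card_fin, mul_left_comm, mul_pow, ENNReal.ofReal_mul (by positivity),
    ENNReal.ofReal_pow (by norm_num), ENNReal.ofReal_ofNat]

variable {μ : Measure (Fin n → ℝ)} {p : ℝ} {K : ℝ≥0∞}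

/-- A restricted `A_p` weight is locally finite: a ball of infinite weight would contain a set of
positive Lebesgue measure and finite positive weight, making the `A_p` ratio infinite. -/
lemma Bound.measure_closedBall_ne_top [SigmaFinite μ] (hμ : μ ≪ volume) (hp : 0 < p)
    (hK : K ≠ ⊤) (h : Bound μ p K) (c : Fin n → ℝ) {r : ℝ} (hr : 0 < r) :
    μ (closedBall c r) ≠ ⊤ := by
  intro hQ
  obtain ⟨F, hFm, hFQ, hF0, hFtop⟩ :=
    Measure.exists_subset_measure_lt_top measurableSet_closedBall (hQ ▸ ENNReal.zero_lt_top)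
  have hvolF : volume F ≠ 0 := fun h => hF0.ne' (hμ h)
  have hratio : volume F / volume (closedBall c r) ≠ 0 :=
    (ENNReal.div_pos_iff.2 ⟨hvolF, measure_closedBall_lt_top.ne⟩).ne'
  have := h c r hr F hFQ hFm
  rw [hQ, ENNReal.top_div_of_ne_top hFtop.ne, ENNReal.top_rpow_of_pos (by positivity),
    ENNReal.mul_top hratio, top_le_iff] at this
  exact hK this

lemma Bound.measure_closedBall_le [SigmaFinite μ] (hμ : μ ≪ volume) (hp : 0 < p) (hK : K ≠ ⊤)
    (h : Bound μ p K) {c : Fin n → ℝ} {r : ℝ} (hr : 0 < r) {F : Set (Fin n → ℝ)}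
    (hFQ : F ⊆ closedBall c r) (hFm : MeasurableSet F) {a : ℝ≥0∞} (ha : a ≠ 0)
    (hdens : a * volume (closedBall c r) ≤ volume F) :
    μ (closedBall c r) ≤ (K / a) ^ p * μ F := by
  have hQtop := h.measure_closedBall_ne_top hμ hp hK c hr
  have hratio : a ≤ volume F / volume (closedBall c r) :=
    (ENNReal.le_div_iff_mul_le (.inl (measure_closedBall_pos volume c hr).ne')
      (.inl measure_closedBall_lt_top.ne)).2 hdens
  have hpow : (μ (closedBall c r) / μ F) ^ (1 / p) ≤ K / a := by
    rw [ENNReal.le_div_iff_mul_le (.inl ha) (.inr hK), mul_comm]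
    exact (mul_le_mul_left hratio _).trans (h c r hr F hFQ hFm)
  rw [one_div, ENNReal.rpow_inv_le_iff hp] at hpow
  refine (ENNReal.div_le_iff_le_mul (.inr ?_) (.inl ?_)).1 hpow
  · exact ENNReal.rpow_ne_top_of_nonneg hp.le (ENNReal.div_ne_top hK ha)
  · exact ne_top_of_le_ne_top hQtop (measure_mono hFQ)

lemma Bound.measure_denseBallSet_le [SigmaFinite μ] (hμ : μ ≪ volume) (hp : 0 < p)
    (hK : K ≠ ⊤) (h : Bound μ p K) {E : Set (Fin n → ℝ)} (hE : MeasurableSet E) {a : ℝ≥0∞}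
    (ha : a ≠ 0) (R : ℝ) :
    μ (denseBallSet E a R) ≤ (4 ^ n * K / a) ^ p * μ E := by
  set T := denseBallSet E a R
  choose! c r hr hrR hxc hdens using fun x (hx : x ∈ T) => hx
  obtain ⟨u, huT, hdisj, hcov⟩ :=
    Vitali.exists_disjoint_subfamily_covering_enlargement_closedBall T c r R hrR 4 (by norm_num)
  have hu : u.Countable := hdisj.countable_of_nonempty_interior fun b hb =>
    (nonempty_ball.2 (hr b (huT hb))).mono (interior_maximal ball_subset_closedBall isOpen_ball)
  have hTcov : T ⊆ ⋃ b ∈ u, closedBall (c b) (4 * r b) := fun x hx => by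
    obtain ⟨b, hb, hsub⟩ := hcov x hx
    exact mem_iUnion₂.2 ⟨b, hb, hsub (hxc x hx)⟩
  have hball : ∀ b ∈ u,
      μ (closedBall (c b) (4 * r b)) ≤ (4 ^ n * K / a) ^ p * μ (E ∩ closedBall (c b) (r b)) := by
    intro b hbu
    have hb := huT hbu
    have h4 : (4 : ℝ≥0∞) ^ n ≠ 0 := pow_ne_zero _ (by norm_num)
    have hdens4 : a / 4 ^ n * volume (closedBall (c b) (4 * r b)) ≤
        volume (E ∩ closedBall (c b) (r b)) := by
      rw [volume_closedBall_four_mul _ (hr b hb).le, ← mul_assoc,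
        ENNReal.div_mul_cancel h4 (ENNReal.pow_ne_top (by norm_num))]
      exact hdens b hb
    have := h.measure_closedBall_le hμ hp hK (by linarith [hr b hb])
      (inter_subset_right.trans (closedBall_subset_closedBall (by linarith [hr b hb])))
      (hE.inter measurableSet_closedBall) (ENNReal.div_ne_zero.2 ⟨ha, by simp⟩) hdens4
    rwa [div_eq_mul_inv, ENNReal.inv_div (.inl (ENNReal.pow_ne_top (by norm_num))) (.inl h4),
      ← mul_div_assoc, mul_comm K] at this
  calc μ T ≤ μ (⋃ b ∈ u, closedBall (c b) (4 * r b)) := measure_mono hTcov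
    _ ≤ ∑' b : u, μ (closedBall (c b) (4 * r b)) := measure_biUnion_le μ hu _
    _ ≤ ∑' b : u, (4 ^ n * K / a) ^ p * μ (E ∩ closedBall (c b) (r b)) :=
        ENNReal.tsum_le_tsum fun b => hball b b.2
    _ = (4 ^ n * K / a) ^ p * μ (⋃ b ∈ u, E ∩ closedBall (c b) (r b)) := by
        rw [ENNReal.tsum_mul_left, measure_biUnion hu (hdisj.mono fun b => inter_subset_right)
          fun b _ => hE.inter measurableSet_closedBall]
    _ ≤ (4 ^ n * K / a) ^ p * μ E := by
        gcongr
        exact iUnion₂_subset fun b _ => inter_subset_left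

lemma Bound.measure_setOf_lt_maxInd_le [SigmaFinite μ] (hμ : μ ≪ volume) (hp : 0 < p)
    (hK : K ≠ ⊤) (h : Bound μ p K) {E : Set (Fin n → ℝ)} (hE : MeasurableSet E) {a : ℝ≥0∞}
    (ha : a ≠ 0) :
    μ {x | a < maxInd E x} ≤ (4 ^ n * K / a) ^ p * μ E :=
  calc μ {x | a < maxInd E x} ≤ μ (⋃ R : ℝ, denseBallSet E a R) :=
        measure_mono (setOf_lt_maxInd_subset E a)
    _ = ⨆ R : ℝ, μ (denseBallSet E a R) := (monotone_denseBallSet E a).measure_iUnion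
    _ ≤ (4 ^ n * K / a) ^ p * μ E := iSup_le (h.measure_denseBallSet_le hμ hp hK hE ha)

end RestrictedAp

/-- **Restricted weak type bound for `M` with `A_p^R` weights.** If `1 ≤ p < ∞` and
`[w]_{A_p^R} ≤ K < ∞`, then `‖M𝟙_E‖_{L^{p,∞}(w)} ≲ K · w(E)^{1/p}`, with an implicit
constant depending only on `n` and `p`. -/
theorem stmt_10 (n : ℕ) (p : ℝ) (hp : 1 ≤ p) :
    ∃ C : ℝ, 0 < C ∧
      ∀ (w : (Fin n → ℝ) → ℝ), (∀ x, 0 ≤ w x) → Measurable w →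
      ∀ K : ℝ≥0∞, K ≠ ⊤ →
      (∀ (c : Fin n → ℝ) (r : ℝ), 0 < r →
        ∀ E : Set (Fin n → ℝ), E ⊆ Metric.closedBall c r → MeasurableSet E →
          volume E / volume (Metric.closedBall c r) *
            ((∫⁻ x in Metric.closedBall c r, ENNReal.ofReal (w x)) /
              (∫⁻ x in E, ENNReal.ofReal (w x))) ^ (1 / p) ≤ K) →
      ∀ E : Set (Fin n → ℝ), MeasurableSet E → volume E < ⊤ →
      ∀ lam : ℝ, 0 < lam →
        ENNReal.ofReal lam *
            (∫⁻ x in {x | ENNReal.ofReal lam < maxInd E x}, ENNReal.ofReal (w x)) ^ (1 / p)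
          ≤ ENNReal.ofReal C * K * (∫⁻ x in E, ENNReal.ofReal (w x)) ^ (1 / p) := by
  have hp0 : 0 < p := zero_lt_one.trans_le hp
  refine ⟨4 ^ n, by positivity, fun w _ _ K hK hAp E hE _ lam hlam => ?_⟩
  set μ := volume.withDensity fun x => ENNReal.ofReal (w x)
  have hμ : ∀ s, ∫⁻ x in s, ENNReal.ofReal (w x) = μ s := fun s => (withDensity_apply' _ s).symm
  simp only [hμ] at hAp ⊢
  have hlam0 : ENNReal.ofReal lam ≠ 0 := (ENNReal.ofReal_pos.2 hlam).ne'
  have hweak := RestrictedAp.Bound.measure_setOf_lt_maxInd_le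
    (withDensity_absolutelyContinuous _ _) hp0 hK hAp hE hlam0
  calc ENNReal.ofReal lam * μ {x | ENNReal.ofReal lam < maxInd E x} ^ (1 / p)
      ≤ ENNReal.ofReal lam * ((4 ^ n * K / ENNReal.ofReal lam) ^ p * μ E) ^ (1 / p) := by
        gcongr
    _ = ENNReal.ofReal (4 ^ n) * K * μ E ^ (1 / p) := by
        rw [ENNReal.mul_rpow_of_nonneg _ _ (by positivity), ← ENNReal.rpow_mul,
          mul_one_div_cancel hp0.ne', ENNReal.rpow_one, ← mul_assoc,
          ENNReal.mul_div_cancel hlam0 ENNReal.ofReal_ne_top, ENNReal.ofReal_pow (by norm_num),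
          ENNReal.ofReal_ofNat]
end
end

section
/- Let A, B, C be Young functions such that A⁻¹(t)·B⁻¹(t) ≤ c₁·C⁻¹(t) for all t ≥ t₀ > 0. Then there is a constant c₂ such that for all cubes Q and measurable f, g: ‖fg‖_{C,Q} ≤ c₂ ‖f‖_{A,Q} ‖g‖_{B,Q}. -/
/-! For `u, v ≥ 0` put `t = A u + B v + t₀`. Then `u ≤ A⁻¹ t` and `v ≤ B⁻¹ t`, so
`uv/c₁ ≤ C⁻¹ t`, i.e. `C(uv/c₁) ≤ A u + B v + t₀`. Applying this to `u = |f|/λ_A`,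
`v = |g|/λ_B` with `λ_A, λ_B` admissible in the Luxemburg infima, averaging over `Q` and using
`C(z/k) ≤ C(z)/k` for `k ≥ 1` shows that `(2 + t₀) c₁ λ_A λ_B` is admissible for `fg`; taking
infima gives the inequality. Since `0 · ∞ = 0` in `ℝ≥0∞`, a vanishing norm needs a separate
argument: it forces the function to vanish a.e., because `Φ(δ/λ) → ∞` as `λ → 0`. -/

open Set Filter MeasureTheory
open scoped ENNReal

noncomputable section

/-- A Young function. -/
def IsYoung (Φ : ℝ → ℝ) : Prop :=
  ContinuousOn Φ (Set.Ici 0) ∧ ConvexOn ℝ (Set.Ici 0) Φ ∧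
  StrictMonoOn Φ (Set.Ici 0) ∧ (∀ t ∈ Set.Ici (0:ℝ), 0 ≤ Φ t) ∧
  Filter.Tendsto (fun t => Φ t / t) (nhdsWithin 0 (Set.Ioi 0)) (nhds 0) ∧
  Filter.Tendsto (fun t => Φ t / t) Filter.atTop Filter.atTop

/-- Extension of a Young function to `ℝ≥0∞`. -/
def eOrl (Φ : ℝ → ℝ) (z : ℝ≥0∞) : ℝ≥0∞ :=
  if z = ⊤ then ⊤ else ENNReal.ofReal (Φ z.toReal)

/-- The normalized Luxemburg norm `‖F‖_{Φ,s} = inf{λ > 0 : ⨍_s Φ(F/λ) ≤ 1}`. -/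
def luxNorm {n : ℕ} (Φ : ℝ → ℝ) (s : Set (Fin n → ℝ)) (F : (Fin n → ℝ) → ℝ≥0∞) : ℝ≥0∞ :=
  sInf {l : ℝ≥0∞ | ∃ lam : ℝ, 0 < lam ∧ l = ENNReal.ofReal lam ∧
    (∫⁻ x in s, eOrl Φ (F x / ENNReal.ofReal lam)) ≤ volume s}

open scoped Topology

namespace IsYoung

variable {Φ : ℝ → ℝ}

theorem strictMonoOn (hΦ : IsYoung Φ) : StrictMonoOn Φ (Ici 0) := hΦ.2.2.1

theorem monotoneOn (hΦ : IsYoung Φ) : MonotoneOn Φ (Ici 0) := hΦ.strictMonoOn.monotoneOn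

theorem nonneg (hΦ : IsYoung Φ) {t : ℝ} (ht : 0 ≤ t) : 0 ≤ Φ t := hΦ.2.2.2.1 t ht

/-- `Φ t = (Φ t / t) * t → 0` as `t → 0⁺`, while continuity gives `Φ t → Φ 0`. -/
theorem map_zero (hΦ : IsYoung Φ) : Φ 0 = 0 := by
  have hcont : Tendsto Φ (𝓝[>] 0) (𝓝 (Φ 0)) :=
    (hΦ.1 0 self_mem_Ici).tendsto.mono_left (nhdsWithin_mono _ Ioi_subset_Ici_self)
  have hprod : Tendsto (fun t => Φ t / t * t) (𝓝[>] 0) (𝓝 0) := by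
    simpa using hΦ.2.2.2.2.1.mul (tendsto_id.mono_left nhdsWithin_le_nhds)
  refine tendsto_nhds_unique hcont (hprod.congr' ?_)
  filter_upwards [self_mem_nhdsWithin] with t (ht : 0 < t)
  exact div_mul_cancel₀ _ ht.ne'

theorem tendsto_atTop (hΦ : IsYoung Φ) : Tendsto Φ atTop atTop := by
  refine tendsto_atTop_mono' _ ?_ tendsto_id
  filter_upwards [hΦ.2.2.2.2.2.eventually_ge_atTop 1, eventually_gt_atTop 0] with t h1 ht
  simpa using (le_div_iff₀ ht).1 h1

theorem map_div_le (hΦ : IsYoung Φ) {k z : ℝ} (hk : 1 ≤ k) (hz : 0 ≤ z) :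
    Φ (z / k) ≤ Φ z / k := by
  have hk₀ : 0 < k := one_pos.trans_le hk
  have hconv := hΦ.2.1.2 (mem_Ici.2 hz) self_mem_Ici (inv_nonneg.2 hk₀.le)
    (sub_nonneg.2 (inv_le_one_of_one_le₀ hk)) (add_sub_cancel _ _)
  simpa [hΦ.map_zero, div_eq_inv_mul] using hconv

end IsYoung

theorem eOrl_ofReal_div_ofReal (Φ : ℝ → ℝ) {a lam : ℝ} (ha : 0 ≤ a) (hlam : 0 < lam) :
    eOrl Φ (ENNReal.ofReal a / ENNReal.ofReal lam) = ENNReal.ofReal (Φ (a / lam)) := by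
  have hne : ENNReal.ofReal a / ENNReal.ofReal lam ≠ ⊤ :=
    ENNReal.div_ne_top ENNReal.ofReal_ne_top (ENNReal.ofReal_pos.2 hlam).ne'
  rw [eOrl, if_neg hne, ENNReal.toReal_div, ENNReal.toReal_ofReal ha,
    ENNReal.toReal_ofReal hlam.le]

theorem monotone_eOrl {Φ : ℝ → ℝ} (hΦ : MonotoneOn Φ (Ici 0)) : Monotone (eOrl Φ) := by
  intro z w hzw
  by_cases hw : w = ⊤
  · simp [eOrl, hw]
  have hz : z ≠ ⊤ := ne_top_of_le_ne_top hw hzw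
  simp only [eOrl, if_neg hw, if_neg hz]
  exact ENNReal.ofReal_le_ofReal (hΦ ENNReal.toReal_nonneg ENNReal.toReal_nonneg
    (ENNReal.toReal_mono hw hzw))

theorem mul_measure_le_lintegral_eOrl {α : Type*} [MeasurableSpace α] {μ : Measure α}
    {Φ : ℝ → ℝ} (hΦ : MonotoneOn Φ (Ici 0)) {f : α → ℝ} (hf : Measurable f) {δ lam : ℝ}
    (hδ : 0 ≤ δ) (hlam : 0 < lam) :
    ENNReal.ofReal (Φ (δ / lam)) * μ {x | δ ≤ |f x|} ≤
      ∫⁻ x, eOrl Φ (ENNReal.ofReal |f x| / ENNReal.ofReal lam) ∂μ := by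
  have hmeas : Measurable fun x => eOrl Φ (ENNReal.ofReal |f x| / ENNReal.ofReal lam) :=
    (monotone_eOrl hΦ).measurable.comp (by fun_prop)
  refine le_trans ?_
    (mul_meas_ge_le_lintegral₀ hmeas.aemeasurable (ENNReal.ofReal (Φ (δ / lam))))
  gcongr
  intro hx
  rw [← eOrl_ofReal_div_ofReal Φ hδ hlam]
  exact monotone_eOrl hΦ (by gcongr)

section LuxemburgNorm

variable {n : ℕ} {Φ : ℝ → ℝ} {s : Set (Fin n → ℝ)} {F : (Fin n → ℝ) → ℝ≥0∞}

theorem luxNorm_le_ofReal {lam : ℝ} (hlam : 0 < lam)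
    (h : ∫⁻ x in s, eOrl Φ (F x / ENNReal.ofReal lam) ≤ volume s) :
    luxNorm Φ s F ≤ ENNReal.ofReal lam :=
  sInf_le ⟨lam, hlam, rfl, h⟩

theorem lintegral_eOrl_le_of_luxNorm_lt (hΦ : MonotoneOn Φ (Ici 0)) {lam : ℝ}
    (h : luxNorm Φ s F < ENNReal.ofReal lam) :
    ∫⁻ x in s, eOrl Φ (F x / ENNReal.ofReal lam) ≤ volume s := by
  obtain ⟨_, ⟨lam', hlam', rfl, hI⟩, hlt⟩ := sInf_lt_iff.1 h
  refine le_trans (lintegral_mono fun x => monotone_eOrl hΦ ?_) hI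
  exact ENNReal.div_le_div_left hlt.le _

theorem luxNorm_eq_zero_of_ae_eq_zero (hΦ : Φ 0 = 0) (hF : F =ᵐ[volume.restrict s] 0) :
    luxNorm Φ s F = 0 := by
  refine le_antisymm (le_of_forall_gt fun c hc => ?_) zero_le
  obtain ⟨ε, -, hε, hεc⟩ := ENNReal.lt_iff_exists_real_btwn.1 hc
  refine lt_of_le_of_lt (luxNorm_le_ofReal (ENNReal.ofReal_pos.1 hε) ?_) hεc
  have hI : (fun x => eOrl Φ (F x / ENNReal.ofReal ε)) =ᵐ[volume.restrict s] 0 :=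
    hF.mono fun x hx => by simp [hx, eOrl, hΦ]
  simp [lintegral_congr_ae hI]

theorem measure_le_abs_eq_zero_of_luxNorm_eq_zero (hΦ : IsYoung Φ) (hs : volume s ≠ ⊤)
    {f : (Fin n → ℝ) → ℝ} (hf : Measurable f)
    (h : luxNorm Φ s (fun x => ENNReal.ofReal |f x|) = 0) {δ : ℝ} (hδ : 0 < δ) :
    volume.restrict s {x | δ ≤ |f x|} = 0 := by
  set m := volume.restrict s {x | δ ≤ |f x|}
  by_contra hm
  have hbound : ∀ T > 0, ENNReal.ofReal (Φ T) * m ≤ volume s := fun T hT => by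
    have hlam : 0 < δ / T := div_pos hδ hT
    have hI :=
      mul_measure_le_lintegral_eOrl (μ := volume.restrict s) hΦ.monotoneOn hf hδ.le hlam
    rw [div_div_cancel₀ hδ.ne'] at hI
    exact hI.trans (lintegral_eOrl_le_of_luxNorm_lt hΦ.monotoneOn
      (h ▸ ENNReal.ofReal_pos.2 hlam))
  have hlim : Tendsto (fun T => ENNReal.ofReal (Φ T) * m) atTop (𝓝 ⊤) := by
    simpa [ENNReal.top_mul hm] using
      ENNReal.Tendsto.mul_const (b := m) (ENNReal.tendsto_ofReal_atTop.comp hΦ.tendsto_atTop)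
        (Or.inl ENNReal.top_ne_zero)
  exact hs (top_le_iff.1 (le_of_tendsto hlim ((eventually_gt_atTop (0 : ℝ)).mono hbound)))

theorem ae_eq_zero_of_luxNorm_eq_zero (hΦ : IsYoung Φ) (hs : volume s ≠ ⊤)
    {f : (Fin n → ℝ) → ℝ} (hf : Measurable f)
    (h : luxNorm Φ s (fun x => ENNReal.ofReal |f x|) = 0) :
    ∀ᵐ x ∂volume.restrict s, f x = 0 := by
  refine measure_mono_null (fun x (hx : f x ≠ 0) => ?_) (measure_iUnion_null fun m : ℕ =>
    measure_le_abs_eq_zero_of_luxNorm_eq_zero hΦ hs hf h (δ := 1 / (m + 1)) (by positivity))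
  obtain ⟨m, hm⟩ := exists_nat_one_div_lt (abs_pos.2 hx)
  exact mem_iUnion.2 ⟨m, hm.le⟩

end LuxemburgNorm

theorem IsYoung.map_mul_div_le_add {A B C Ainv Binv Cinv : ℝ → ℝ} {c₁ t₀ : ℝ}
    (hA : IsYoung A) (hB : IsYoung B) (hC : MonotoneOn C (Ici 0))
    (hAinv : RightInvOn Ainv A (Ici 0)) (hAinv₀ : MapsTo Ainv (Ici 0) (Ici 0))
    (hBinv : RightInvOn Binv B (Ici 0)) (hBinv₀ : MapsTo Binv (Ici 0) (Ici 0))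
    (hCinv : RightInvOn Cinv C (Ici 0)) (hCinv₀ : MapsTo Cinv (Ici 0) (Ici 0))
    (hc₁ : 0 < c₁) (ht₀ : 0 ≤ t₀) (h : ∀ t ≥ t₀, Ainv t * Binv t ≤ c₁ * Cinv t)
    {u v : ℝ} (hu : 0 ≤ u) (hv : 0 ≤ v) :
    C (u * v / c₁) ≤ A u + B v + t₀ := by
  set t := A u + B v + t₀
  have hAu := hA.nonneg hu
  have hBv := hB.nonneg hv
  have ht : t ∈ Ici 0 := mem_Ici.2 (by positivity)
  have hu' : u ≤ Ainv t :=
    (hA.strictMonoOn.le_iff_le hu (hAinv₀ ht)).1 (by rw [hAinv ht]; linarith)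
  have hv' : v ≤ Binv t :=
    (hB.strictMonoOn.le_iff_le hv (hBinv₀ ht)).1 (by rw [hBinv ht]; linarith)
  have huv : u * v / c₁ ≤ Cinv t := by
    rw [div_le_iff₀' hc₁]
    exact (mul_le_mul hu' hv' hv (hAinv₀ ht)).trans (h t (by linarith))
  calc C (u * v / c₁) ≤ C (Cinv t) := hC (mem_Ici.2 (by positivity)) (hCinv₀ ht) huv
    _ = t := hCinv ht

theorem eOrl_mul_div_le {A B C : ℝ → ℝ} {c t₀ : ℝ} (hA : IsYoung A) (hB : IsYoung B)
    (hC : IsYoung C) (hc : 0 < c) (ht₀ : 0 ≤ t₀)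
    (hABC : ∀ u v, 0 ≤ u → 0 ≤ v → C (u * v / c) ≤ A u + B v + t₀)
    {a b lamA lamB : ℝ} (ha : 0 ≤ a) (hb : 0 ≤ b) (hlamA : 0 < lamA) (hlamB : 0 < lamB) :
    eOrl C (ENNReal.ofReal (a * b) / ENNReal.ofReal ((2 + t₀) * c * lamA * lamB)) ≤
      ENNReal.ofReal (2 + t₀)⁻¹ * (eOrl A (ENNReal.ofReal a / ENNReal.ofReal lamA) +
        eOrl B (ENNReal.ofReal b / ENNReal.ofReal lamB) + ENNReal.ofReal t₀) := by
  have hu : 0 ≤ a / lamA := by positivity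
  have hv : 0 ≤ b / lamB := by positivity
  rw [eOrl_ofReal_div_ofReal _ (by positivity) (by positivity),
    eOrl_ofReal_div_ofReal _ ha hlamA, eOrl_ofReal_div_ofReal _ hb hlamB,
    ← ENNReal.ofReal_add (hA.nonneg hu) (hB.nonneg hv),
    ← ENNReal.ofReal_add (by linarith [hA.nonneg hu, hB.nonneg hv]) ht₀,
    ← ENNReal.ofReal_mul (by positivity)]
  refine ENNReal.ofReal_le_ofReal ?_
  calc C (a * b / ((2 + t₀) * c * lamA * lamB))
      = C (a / lamA * (b / lamB) / c / (2 + t₀)) := by field_simp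
    _ ≤ C (a / lamA * (b / lamB) / c) / (2 + t₀) := hC.map_div_le (by linarith) (by positivity)
    _ ≤ (A (a / lamA) + B (b / lamB) + t₀) / (2 + t₀) := by gcongr; exact hABC _ _ hu hv
    _ = _ := div_eq_inv_mul _ _

/-- The factor `2 + t₀` absorbs the two unit averages of `A(|f|/λ_A)`, `B(|g|/λ_B)` and the
constant `t₀`, by convexity of `C`. -/
theorem lintegral_eOrl_mul_le {n : ℕ} {A B C : ℝ → ℝ} {c t₀ : ℝ} (hA : IsYoung A)
    (hB : IsYoung B) (hC : IsYoung C) (hc : 0 < c) (ht₀ : 0 ≤ t₀)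
    (hABC : ∀ u v, 0 ≤ u → 0 ≤ v → C (u * v / c) ≤ A u + B v + t₀)
    {s : Set (Fin n → ℝ)} {f g : (Fin n → ℝ) → ℝ} (hg : Measurable g) {lamA lamB : ℝ}
    (hlamA : 0 < lamA) (hlamB : 0 < lamB)
    (hIA : ∫⁻ x in s, eOrl A (ENNReal.ofReal |f x| / ENNReal.ofReal lamA) ≤ volume s)
    (hIB : ∫⁻ x in s, eOrl B (ENNReal.ofReal |g x| / ENNReal.ofReal lamB) ≤ volume s) :
    ∫⁻ x in s, eOrl C (ENNReal.ofReal |f x * g x| /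
      ENNReal.ofReal ((2 + t₀) * c * lamA * lamB)) ≤ volume s := by
  set k := 2 + t₀
  have hpt : ∀ x, eOrl C (ENNReal.ofReal |f x * g x| / ENNReal.ofReal (k * c * lamA * lamB)) ≤
      ENNReal.ofReal k⁻¹ * (eOrl A (ENNReal.ofReal |f x| / ENNReal.ofReal lamA) +
        eOrl B (ENNReal.ofReal |g x| / ENNReal.ofReal lamB) + ENNReal.ofReal t₀) := fun x => by
    rw [abs_mul]
    exact eOrl_mul_div_le hA hB hC hc ht₀ hABC (abs_nonneg _) (abs_nonneg _) hlamA hlamB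
  have hmeasB : Measurable fun x => eOrl B (ENNReal.ofReal |g x| / ENNReal.ofReal lamB) :=
    (monotone_eOrl hB.monotoneOn).measurable.comp (by fun_prop)
  calc _ ≤ ∫⁻ x in s, ENNReal.ofReal k⁻¹ *
          (eOrl A (ENNReal.ofReal |f x| / ENNReal.ofReal lamA) +
            eOrl B (ENNReal.ofReal |g x| / ENNReal.ofReal lamB) + ENNReal.ofReal t₀) :=
        lintegral_mono hpt
    _ = ENNReal.ofReal k⁻¹ *
          ((∫⁻ x in s, eOrl A (ENNReal.ofReal |f x| / ENNReal.ofReal lamA)) +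
            (∫⁻ x in s, eOrl B (ENNReal.ofReal |g x| / ENNReal.ofReal lamB)) +
            ENNReal.ofReal t₀ * volume s) := by
        rw [lintegral_const_mul' _ _ ENNReal.ofReal_ne_top,
          lintegral_add_right _ measurable_const, lintegral_add_right _ hmeasB,
          setLIntegral_const]
    _ ≤ ENNReal.ofReal k⁻¹ * (volume s + volume s + ENNReal.ofReal t₀ * volume s) := by
        gcongr
    _ = ENNReal.ofReal k⁻¹ * (ENNReal.ofReal k * volume s) := by
        rw [ENNReal.ofReal_add zero_le_two ht₀, ENNReal.ofReal_ofNat]; ring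
    _ = volume s := by
        rw [← mul_assoc, ← ENNReal.ofReal_mul (by positivity), inv_mul_cancel₀ (by positivity),
          ENNReal.ofReal_one, one_mul]

theorem ENNReal.le_mul_sInf_mul_sInf {x c : ℝ≥0∞} {S T : Set ℝ≥0∞}
    (hc₀ : c ≠ 0) (hc : c ≠ ⊤)
    (hS : sInf S = 0 → x = 0) (hT : sInf T = 0 → x = 0)
    (h : ∀ a ∈ S, ∀ b ∈ T, x ≤ c * a * b) : x ≤ c * sInf S * sInf T := by
  rcases eq_or_ne x 0 with rfl | hx
  · exact zero_le
  have hS₀ : sInf S ≠ 0 := mt hS hx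
  have hT₀ : sInf T ≠ 0 := mt hT hx
  by_cases hSt : sInf S = ⊤
  · simp [hSt, ENNReal.mul_top hc₀, ENNReal.top_mul hT₀]
  by_cases hTt : sInf T = ⊤
  · simp [hTt, ENNReal.mul_top (mul_ne_zero hc₀ hS₀)]
  obtain ⟨a, ha, ha'⟩ := sInf_lt_iff.1 (lt_top_iff_ne_top.2 hSt)
  obtain ⟨b, hb, hb'⟩ := sInf_lt_iff.1 (lt_top_iff_ne_top.2 hTt)
  rw [sInf_eq_iInf', sInf_eq_iInf', ENNReal.mul_iInf_of_ne hc₀ hc]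
  exact ENNReal.le_iInf_mul_iInf ⟨⟨a, ha⟩, ENNReal.mul_ne_top hc ha'.ne⟩ ⟨⟨b, hb⟩, hb'.ne⟩
    fun a b => h a a.2 b b.2

/-- **Hölder inequality for three Young functions:** if `A⁻¹(t)·B⁻¹(t) ≤ c₁·C⁻¹(t)`
for all `t ≥ t₀ > 0`, then `‖fg‖_{C,Q} ≤ c₂ ‖f‖_{A,Q} ‖g‖_{B,Q}` for all cubes `Q`
(closed balls in sup norm) and measurable `f, g`. -/
theorem stmt_13 (A B C : ℝ → ℝ) (Ainv Binv Cinv : ℝ → ℝ)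
    (hA : IsYoung A) (hB : IsYoung B) (hC : IsYoung C)
    (hAinv : ∀ t ∈ Set.Ici (0:ℝ), A (Ainv t) = t ∧ Ainv (A t) = t ∧ 0 ≤ Ainv t)
    (hBinv : ∀ t ∈ Set.Ici (0:ℝ), B (Binv t) = t ∧ Binv (B t) = t ∧ 0 ≤ Binv t)
    (hCinv : ∀ t ∈ Set.Ici (0:ℝ), C (Cinv t) = t ∧ Cinv (C t) = t ∧ 0 ≤ Cinv t)
    (c₁ t₀ : ℝ) (hc₁ : 0 < c₁) (ht₀ : 0 < t₀)
    (h : ∀ t ≥ t₀, Ainv t * Binv t ≤ c₁ * Cinv t) :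
    ∃ c₂ : ℝ, 0 < c₂ ∧
      ∀ (n : ℕ) (cc : Fin n → ℝ) (r : ℝ), 0 < r →
      ∀ f g : (Fin n → ℝ) → ℝ, Measurable f → Measurable g →
        luxNorm C (Metric.closedBall cc r) (fun x => ENNReal.ofReal |f x * g x|) ≤
          ENNReal.ofReal c₂ *
            luxNorm A (Metric.closedBall cc r) (fun x => ENNReal.ofReal |f x|) *
            luxNorm B (Metric.closedBall cc r) (fun x => ENNReal.ofReal |g x|) := by
  have hABC : ∀ u v, 0 ≤ u → 0 ≤ v → C (u * v / c₁) ≤ A u + B v + t₀ := fun u v hu hv =>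
    hA.map_mul_div_le_add hB hC.monotoneOn (fun t ht => (hAinv t ht).1)
      (fun t ht => (hAinv t ht).2.2) (fun t ht => (hBinv t ht).1) (fun t ht => (hBinv t ht).2.2)
      (fun t ht => (hCinv t ht).1) (fun t ht => (hCinv t ht).2.2) hc₁ ht₀.le h hu hv
  refine ⟨(2 + t₀) * c₁, by positivity, fun n cc r _ f g hf hg => ?_⟩
  have hQ : volume (Metric.closedBall cc r) ≠ ⊤ := measure_closedBall_lt_top.ne
  refine ENNReal.le_mul_sInf_mul_sInf (ENNReal.ofReal_pos.2 (by positivity)).ne'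
    ENNReal.ofReal_ne_top (fun hf₀ => ?_) (fun hg₀ => ?_) ?_
  · exact luxNorm_eq_zero_of_ae_eq_zero hC.map_zero
      ((ae_eq_zero_of_luxNorm_eq_zero hA hQ hf hf₀).mono fun x hx => by simp [hx])
  · exact luxNorm_eq_zero_of_ae_eq_zero hC.map_zero
      ((ae_eq_zero_of_luxNorm_eq_zero hB hQ hg hg₀).mono fun x hx => by simp [hx])
  rintro _ ⟨lamA, hlamA, rfl, hIA⟩ _ ⟨lamB, hlamB, rfl, hIB⟩
  rw [← ENNReal.ofReal_mul (by positivity), ← ENNReal.ofReal_mul (by positivity)]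
  exact luxNorm_le_ofReal (by positivity)
    (lintegral_eOrl_mul_le hA hB hC hc₁ ht₀.le hABC hg hlamA hlamB hIA hIB)
end
end
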